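/- Let n ∈ ℕ and let π : {1,…,n} → {1,…,n} be the permutation listing the odd integers in increasing order followed by the even integers in decreasing order. Then for all i, j ∈ {1,…,n}, (-1)^{min(π(i),π(j))+1} = 1 if and only if i + j ≤ n + 1. -/
import Mathlib

/-- The permutation of `{1,…,n}` listing odd integers in increasing order followed by
the even integers in decreasing order: with `m = ⌈n/2⌉`,
`π i = 2i - 1` for `1 ≤ i ≤ m` and `π i = 2(n + 1 - i)` for `m < i ≤ n`. -/
def oddEvenPerm (n : ℕ) (i : ℕ) : ℕ :=
  if i ≤ (n + 1) / 2 then 2 * i - 1 else 2 * (n + 1 - i)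

theorem oddEvenPerm_sign_iff (n : ℕ) (i j : ℕ) (hi : i ∈ Set.Icc 1 n)
    (hj : j ∈ Set.Icc 1 n) :
    (-1 : ℤ) ^ (min (oddEvenPerm n i) (oddEvenPerm n j) + 1) = 1 ↔ i + j ≤ n + 1 := by
  simp only [Set.mem_Icc] at hi hj
  rw [neg_one_pow_eq_one_iff_even (by norm_num), Nat.even_add_one, Nat.not_even_iff]
  unfold oddEvenPerm
  split_ifs <;> omega
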